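/- Suppose G₁, …, G_N are i.i.d. random perturbations of a ground truth DAG G = (V, A) with parameters δ₁ = 0.5 − ε (edge flip probability, ε > 0) and δ₂ ∈ [0,1] (spurious edge probability). Let Ĝ be the weighted ensemble graph whose arc weights are the normalized counts of each arc's occurrences across the N graphs. Then P(G ⊆ MAS(Ĝ)) ≥ 1 − 2|A| exp(−Nε²/2) − 2U exp(−Nε² / (6U²δ₂ + 2Uε)), where U = |V|(|V|−1)/2 − |A| is the number of unconnected pairs in G and MAS(Ĝ) is a maximum-weight acyclic subgraph of Ĝ. -/

import Mathlib

open MeasureTheory ProbabilityTheory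

/-- A relation is acyclic if no vertex reaches itself by a nonempty directed walk. -/
def Acyclic {V : Type*} (R : V → V → Prop) : Prop :=
  ∀ v : V, ¬ Relation.TransGen R v v

/-- `H` is a maximum-weight acyclic subgraph for the weight function `w`
(candidate arcs are all ordered pairs of distinct vertices; arcs of zero weight
are treated as existing). -/
def IsMaxAcyclicSubgraph {V : Type*} [Fintype V] [DecidableEq V]
    (w : V × V → ℝ) (H : Finset (V × V)) : Prop :=
  H ⊆ (Finset.univ : Finset V).offDiag ∧
  Acyclic (fun a b => (a, b) ∈ H) ∧
  ∀ H' : Finset (V × V), H' ⊆ (Finset.univ : Finset V).offDiag →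
    Acyclic (fun a b => (a, b) ∈ H') → ∑ e ∈ H', w e ≤ ∑ e ∈ H, w e

/-!
Order the vertices by a linear extension of `G`. If a maximum acyclic subgraph `H` of `Ĝ` missed
an arc `e` of `G`, then reorienting every arc of `H` forwards and adding `e` would give a heavier
acyclic graph as soon as every arc of `G` beats its reversal by more than the total imbalance
`∑ |w(u → v) - w(v → u)|` of the unconnected pairs `{u, v}`: reversed arcs of `G` only gain
weight, and each unconnected pair loses at most its imbalance. This can only fail if some arc of
`G` occurs in at most a fraction `1/2 + 3ε/8` of the samples (Hoeffding), or some unconnected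
pair has imbalance at least `3ε/(4U)` (a Chernoff bound with a Bernstein-type moment estimate);
a union bound over these events gives the estimate.
-/

namespace Acyclic

variable {V : Type*} {R : V → V → Prop}

theorem irrefl (h : Acyclic R) (v : V) : ¬ R v v :=
  fun hv => h v (.single hv)

theorem asymm (h : Acyclic R) {u v : V} (huv : R u v) : ¬ R v u :=
  fun hvu => h u (.tail (.single huv) hvu)

theorem of_map_lt {β : Type*} [Preorder β] (f : V → β) (hf : ∀ a b, R a b → f a < f b) :
    Acyclic R := by
  have hlt : ∀ a b, Relation.TransGen R a b → f a < f b := fun a b hab => by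
    induction hab with
    | single h => exact hf _ _ h
    | tail _ h ih => exact ih.trans (hf _ _ h)
  exact fun v hv => lt_irrefl _ (hlt v v hv)

theorem exists_rank [Fintype V] (h : Acyclic R) : ∃ f : V → ℕ, ∀ a b, R a b → f a < f b := by
  classical
  refine ⟨fun v => (Finset.univ.filter fun a => Relation.TransGen R a v).card,
    fun a b hab => Finset.card_lt_card ?_⟩
  refine (Finset.ssubset_iff_of_subset fun x hx => ?_).2 ⟨a, ?_, ?_⟩
  · simp only [Finset.mem_filter, Finset.mem_univ, true_and] at hx ⊢
    exact hx.tail hab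
  · simpa using Relation.TransGen.single hab
  · simpa using h a

end Acyclic

section Orient

variable {V β : Type*} [LinearOrder β] (key : V → β)

def orientBy (q : V × V) : V × V :=
  if key q.1 < key q.2 then q else q.swap

theorem orientBy_eq_or (q : V × V) : orientBy key q = q ∨ orientBy key q = q.swap := by
  unfold orientBy
  split_ifs <;> simp

theorem orientBy_of_lt {q : V × V} (hq : key q.1 < key q.2) : orientBy key q = q :=
  if_pos hq

theorem lt_orientBy {key : V → β} (hkey : Function.Injective key) {q : V × V} (hq : q.1 ≠ q.2) :
    key (orientBy key q).1 < key (orientBy key q).2 := by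
  unfold orientBy
  split_ifs with h
  · exact h
  · exact lt_of_le_of_ne (not_lt.1 h) (hkey.ne hq.symm)

theorem injOn_orientBy {H : Finset (V × V)} (hH : ∀ q ∈ H, q.swap ∉ H) :
    Set.InjOn (orientBy key) H := by
  intro p hp q hq hpq
  rcases orientBy_eq_or key p with hp' | hp' <;> rcases orientBy_eq_or key q with hq' | hq' <;>
    rw [hp', hq'] at hpq
  · exact hpq
  · exact absurd (hpq ▸ hp) (hH q hq)
  · exact absurd (hpq ▸ hq) (by simpa using hH p hp)
  · exact Prod.swap_injective hpq

end Orient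

section UnconnectedPairs

variable {V : Type*} [Fintype V] [DecidableEq V]

theorem card_le_choose_two {S : Finset (V × V)} (hS : ∀ p ∈ S, p.1 ≠ p.2)
    (hswap : ∀ p ∈ S, p.swap ∉ S) : S.card ≤ (Fintype.card V).choose 2 := by
  rw [← Finset.card_univ, ← Sym2.card_image_offDiag]
  refine Finset.card_le_card_of_injOn (Function.uncurry Sym2.mk) (fun p hp => ?_) ?_
  · simpa using ⟨p.1, p.2, hS p hp, rfl⟩
  · intro p hp q hq hpq
    rcases Sym2.mk_eq_mk_iff.1 hpq with h | h
    · exact h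
    · exact absurd (h ▸ hp) (hswap q hq)

variable [LinearOrder V]

def unconnectedPairs (A : Finset (V × V)) : Finset (V × V) :=
  Finset.univ.filter fun p => p.1 < p.2 ∧ p ∉ A ∧ p.swap ∉ A

theorem card_unconnectedPairs_le {A : Finset (V × V)} (hA : Acyclic fun a b => (a, b) ∈ A) :
    ((unconnectedPairs A).card : ℝ) ≤
      (Fintype.card V * (Fintype.card V - 1) : ℝ) / 2 - A.card := by
  have hdisj : Disjoint (unconnectedPairs A) A :=
    Finset.disjoint_left.2 fun p hp => (Finset.mem_filter.1 hp).2.2.1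
  rw [← Nat.cast_choose_two, le_sub_iff_add_le, ← Nat.cast_add,
    ← Finset.card_union_of_disjoint hdisj, Nat.cast_le]
  refine card_le_choose_two (fun p hp => ?_) (fun p hp hp' => ?_)
  · rcases Finset.mem_union.1 hp with hp | hp
    · exact (Finset.mem_filter.1 hp).2.1.ne
    · obtain ⟨a, b⟩ := p
      rintro (rfl : a = b)
      exact hA.irrefl a hp
  · simp only [unconnectedPairs, Finset.mem_union, Finset.mem_filter, Finset.mem_univ,
      true_and, Prod.swap_swap] at hp hp'
    rcases hp with ⟨hlt, -, hpA⟩ | hp <;> rcases hp' with ⟨hlt', -, hpA'⟩ | hp'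
    · exact lt_asymm hlt hlt'
    · exact hpA hp'
    · exact hpA' hp
    · exact hA.asymm hp hp'

theorem sum_filter_unconnected_le {A K : Finset (V × V)} (w : V × V → ℝ)
    (hK : ∀ q ∈ K, q.1 ≠ q.2) (hswap : ∀ q ∈ K, q.swap ∉ K) :
    ∑ q ∈ K with q ∉ A ∧ q.swap ∉ A, |w q - w q.swap| ≤
      ∑ c ∈ unconnectedPairs A, |w c - w c.swap| := by
  have hsymm : ∀ q, |w (orientBy id q) - w (orientBy id q).swap| = |w q - w q.swap| := by
    intro q
    rcases orientBy_eq_or id q with h | h <;> rw [h]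
    rw [Prod.swap_swap, abs_sub_comm]
  have himage : {q ∈ K | q ∉ A ∧ q.swap ∉ A}.image (orientBy id) ⊆ unconnectedPairs A := by
    simp only [Finset.subset_iff, Finset.mem_image, forall_exists_index, and_imp]
    rintro _ q hq rfl
    obtain ⟨hqK, hqA, hqsA⟩ := Finset.mem_filter.1 hq
    refine Finset.mem_filter.2 ⟨Finset.mem_univ _, lt_orientBy Function.injective_id (hK q hqK), ?_⟩
    rcases orientBy_eq_or id q with h | h <;> rw [h]
    · exact ⟨hqA, hqsA⟩
    · exact ⟨hqsA, by simpa using hqA⟩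
  calc _ = ∑ q ∈ {q ∈ K | q ∉ A ∧ q.swap ∉ A}.image (orientBy id), |w q - w q.swap| := by
        rw [Finset.sum_image ((injOn_orientBy id hswap).mono (Finset.filter_subset _ _))]
        simp_rw [hsymm]
    _ ≤ _ := Finset.sum_le_sum_of_subset_of_nonneg himage fun _ _ _ => abs_nonneg _

end UnconnectedPairs

section MaxAcyclicSubgraph

variable {V : Type*} [Fintype V] [DecidableEq V] [LinearOrder V]

theorem neg_le_sum_orientBy_sub {β : Type*} [LinearOrder β] {key : V → β}
    {A K : Finset (V × V)} {w : V × V → ℝ}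
    (hA : ∀ e ∈ A, key e.1 < key e.2) (hAw : ∀ e ∈ A, w e.swap ≤ w e)
    (hK : ∀ q ∈ K, q.1 ≠ q.2) (hswap : ∀ q ∈ K, q.swap ∉ K) :
    -∑ c ∈ unconnectedPairs A, |w c - w c.swap| ≤ ∑ q ∈ K, (w (orientBy key q) - w q) := by
  have hunc : ∀ q, -|w q - w q.swap| ≤ w (orientBy key q) - w q := fun q => by
    rcases orientBy_eq_or key q with h | h <;> rw [h]
    · simp
    · rw [abs_sub_comm]
      exact neg_abs_le _
  have hconn : ∀ q, ¬(q ∉ A ∧ q.swap ∉ A) → 0 ≤ w (orientBy key q) - w q := fun q hq => by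
    by_cases hqA : q ∈ A
    · rw [orientBy_of_lt key (hA q hqA), sub_self]
    · have hqsA : q.swap ∈ A := by tauto
      rcases orientBy_eq_or key q with h | h <;> rw [h]
      · rw [sub_self]
      · simpa using hAw _ hqsA
  have hfilter := Finset.sum_filter_add_sum_filter_not K (fun q => q ∉ A ∧ q.swap ∉ A)
    fun q => w (orientBy key q) - w q
  have hloss := sum_filter_unconnected_le (A := A) w hK hswap
  have hunc_sum := Finset.sum_le_sum fun q (_ : q ∈ K.filter fun q => q ∉ A ∧ q.swap ∉ A) =>
    hunc q
  have hconn_sum := Finset.sum_nonneg fun q (hq : q ∈ K.filter fun q => ¬(q ∉ A ∧ q.swap ∉ A)) =>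
    hconn q (Finset.mem_filter.1 hq).2
  rw [Finset.sum_neg_distrib] at hunc_sum
  linarith

theorem sum_insert_image_orientBy_ge {β : Type*} [LinearOrder β] {key : V → β}
    (hkey : Function.Injective key) {A H : Finset (V × V)} {w : V × V → ℝ} (hw : ∀ p, 0 ≤ w p)
    (hA : ∀ e ∈ A, key e.1 < key e.2) (hAw : ∀ e ∈ A, w e.swap ≤ w e)
    (hH : ∀ q ∈ H, q.1 ≠ q.2) (hswap : ∀ q ∈ H, q.swap ∉ H) {e : V × V} (he : e ∈ A)
    (heH : e ∉ H) :
    ∑ q ∈ H, w q + (w e - w e.swap) - ∑ c ∈ unconnectedPairs A, |w c - w c.swap| ≤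
      ∑ q ∈ insert e (H.image (orientBy key)), w q := by
  have hsum_image : ∑ q ∈ H.image (orientBy key), w q =
      ∑ q ∈ H, w q + ∑ q ∈ H, (w (orientBy key q) - w q) := by
    rw [Finset.sum_image (injOn_orientBy key hswap), Finset.sum_sub_distrib]
    ring
  by_cases hes : e.swap ∈ H
  · have hflip : orientBy key e.swap = e := by
      rcases orientBy_eq_or key e.swap with h | h
      · have hlt := lt_orientBy hkey (hH _ hes)
        rw [h] at hlt
        exact absurd hlt (hA e he).asymm
      · simpa using h
    have hsplit := Finset.add_sum_erase H (fun q => w (orientBy key q) - w q) hes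
    rw [hflip] at hsplit
    rw [Finset.insert_eq_of_mem (Finset.mem_image.2 ⟨_, hes, hflip⟩), hsum_image, ← hsplit]
    linarith [neg_le_sum_orientBy_sub hA hAw (K := H.erase e.swap)
      (fun q hq => hH q (Finset.mem_of_mem_erase hq))
      fun q hq hq' => hswap q (Finset.mem_of_mem_erase hq) (Finset.mem_of_mem_erase hq')]
  · have he' : e ∉ H.image (orientBy key) := by
      simp only [Finset.mem_image, not_exists, not_and]
      intro q hq hqe
      rcases orientBy_eq_or key q with h | h <;> rw [h] at hqe
      · exact heH (hqe ▸ hq)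
      · exact hes (by simpa [← hqe] using hq)
    rw [Finset.sum_insert he', hsum_image]
    linarith [neg_le_sum_orientBy_sub hA hAw hH hswap, hw e.swap]

theorem IsMaxAcyclicSubgraph.subset {A H : Finset (V × V)} {w : V × V → ℝ}
    (hA : Acyclic fun a b => (a, b) ∈ A) (hw : ∀ p, 0 ≤ w p)
    (hgap : ∀ e ∈ A, ∑ c ∈ unconnectedPairs A, |w c - w c.swap| < w e - w e.swap)
    (hH : IsMaxAcyclicSubgraph w H) : A ⊆ H := by
  obtain ⟨hHoff, hHacyc, hHmax⟩ := hH
  obtain ⟨rank, hrank⟩ := hA.exists_rank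
  set key : V → ℕ ×ₗ V := fun v => toLex (rank v, v)
  have hkey : Function.Injective key := fun a b h => congrArg (fun x => (ofLex x).2) h
  have hkeyA : ∀ e ∈ A, key e.1 < key e.2 := fun e he =>
    Prod.Lex.toLex_lt_toLex.2 (.inl (hrank _ _ he))
  have hHd : ∀ q ∈ H, q.1 ≠ q.2 := fun q hq => (Finset.mem_offDiag.1 (hHoff hq)).2.2
  have hAw : ∀ e ∈ A, w e.swap ≤ w e := fun e he => by
    linarith [hgap e he, Finset.sum_nonneg fun c (_ : c ∈ unconnectedPairs A) =>
      abs_nonneg (w c - w c.swap)]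
  intro e he
  by_contra heH
  set H' := insert e (H.image (orientBy key))
  have hH'lt : ∀ q ∈ H', key q.1 < key q.2 := by
    simp only [H', Finset.mem_insert, Finset.mem_image]
    rintro q (rfl | ⟨q, hq, rfl⟩)
    exacts [hkeyA q he, lt_orientBy hkey (hHd q hq)]
  have hH'off : H' ⊆ Finset.univ.offDiag := fun q hq => Finset.mem_offDiag.2
    ⟨Finset.mem_univ _, Finset.mem_univ _, fun h => (hH'lt q hq).ne (congrArg key h)⟩
  have hmax := hHmax H' hH'off (Acyclic.of_map_lt key fun a b => hH'lt (a, b))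
  linarith [sum_insert_image_orientBy_ge hkey hw hkeyA hAw hHd (fun q hq => hHacyc.asymm hq) he heH,
    hgap e he]

end MaxAcyclicSubgraph

theorem Real.exp_le_one_add_add_mul_sq {u : ℝ} (hu : |u| ≤ 1) :
    Real.exp u ≤ 1 + u + 3 / 4 * u ^ 2 := by
  have h := Real.exp_bound hu (n := 2) (by norm_num)
  simp only [Finset.sum_range_succ, Finset.sum_range_zero, Nat.factorial, sq_abs] at h
  norm_num at h
  linarith [(abs_le.1 h).2]

section ConcentrationBounds

open Real

variable {Ω : Type*} [MeasurableSpace Ω] {μ : Measure Ω}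

theorem integrable_ite_bool [IsFiniteMeasure μ] {T : Ω → Bool} (hT : Measurable T) (c : ℝ) :
    Integrable (fun ω => if T ω then c else 0) μ :=
  (integrable_const |c|).mono' (Measurable.ite (hT (measurableSet_singleton true))
    measurable_const measurable_const).aestronglyMeasurable
    (ae_of_all _ fun ω => by split_ifs <;> simp)

theorem integral_ite_bool {T : Ω → Bool} (hT : Measurable T) (c : ℝ) :
    ∫ ω, (if T ω then c else 0) ∂μ = c * μ.real {ω | T ω = true} := by
  have h : (fun ω => if T ω then c else 0) = {ω | T ω = true}.indicator fun _ => c := by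
    ext ω
    simp [Set.indicator_apply]
  have hS : MeasurableSet {ω | T ω = true} := hT (measurableSet_singleton true)
  rw [h, integral_indicator_const _ hS, smul_eq_mul, mul_comm]

theorem measureReal_sum_ite_le_le [IsProbabilityMeasure μ] {N : ℕ} {T : Fin N → Ω → Bool}
    (hT : ∀ i, Measurable (T i)) (hind : iIndepFun T μ) {p t : ℝ}
    (hp : ∀ i, μ.real {ω | T i ω = true} = p) (ht : 0 ≤ t) :
    μ.real {ω | ∑ i, (if T i ω then (1 : ℝ) else 0) ≤ N * (p - t)} ≤ exp (-2 * N * t ^ 2) := by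
  set X : Fin N → Ω → ℝ := fun i ω => p - if T i ω then 1 else 0
  have hXind : iIndepFun X μ :=
    hind.comp (fun _ b => p - if b then 1 else 0) fun _ => measurable_of_countable _
  have hXsub : ∀ i ∈ Finset.univ, HasSubgaussianMGF (X i) ((‖p - (p - 1)‖₊ / 2) ^ 2) μ :=
    fun i _ => hasSubgaussianMGF_of_mem_Icc_of_integral_eq_zero
      ((measurable_of_countable fun b : Bool => p - if b then (1 : ℝ) else 0).comp
        (hT i)).aemeasurable
      (ae_of_all _ fun ω => by simp only [X]; split_ifs <;> simp)
      (by rw [integral_sub (integrable_const p) (integrable_ite_bool (hT i) 1),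
        integral_ite_bool (hT i), hp i]; simp)
  have hc : ((‖p - (p - 1)‖₊ / 2) ^ 2 : NNReal) = 4⁻¹ := by
    ext
    simp only [sub_sub_cancel, nnnorm_one, one_div, inv_pow, NNReal.coe_inv, NNReal.coe_pow,
      NNReal.coe_ofNat]
    norm_num
  have htail :=
    HasSubgaussianMGF.measure_sum_ge_le_of_iIndepFun hXind hXsub (ε := N * t) (by positivity)
  simp only [hc, Finset.sum_const, Finset.card_univ, Fintype.card_fin, nsmul_eq_mul,
    NNReal.coe_mul, NNReal.coe_natCast, NNReal.coe_inv, NNReal.coe_ofNat] at htail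
  refine (measureReal_mono fun ω hω => ?_).trans (htail.trans_eq ?_)
  · replace hω : ∑ i, (if T i ω then (1 : ℝ) else 0) ≤ N * (p - t) := hω
    show N * t ≤ ∑ i, X i ω
    simp only [X, Finset.sum_sub_distrib, Finset.sum_const, Finset.card_univ, Fintype.card_fin,
      nsmul_eq_mul]
    linarith
  · rcases N.eq_zero_or_pos with rfl | hN
    · simp
    · congr 1
      field_simp
      ring

theorem measureReal_sum_ge_le_of_mgf_le [IsFiniteMeasure μ] {ι : Type*} [Fintype ι] {X : ι → Ω → ℝ}
    (hind : iIndepFun X μ) (hX : ∀ i, Measurable (X i)) {t b : ℝ} (ht : 0 ≤ t)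
    (hint : ∀ i, Integrable (fun ω => exp (t * X i ω)) μ) (hb : ∀ i, mgf (X i) μ t ≤ exp b)
    (a : ℝ) : μ.real {ω | a ≤ ∑ i, X i ω} ≤ exp (-t * a + Fintype.card ι * b) := by
  have hmgf : mgf (∑ i, X i) μ t ≤ exp (Fintype.card ι * b) := by
    rw [hind.mgf_sum hX, exp_nat_mul, ← Finset.card_univ, ← Finset.prod_const]
    exact Finset.prod_le_prod (fun i _ => mgf_nonneg) fun i _ => hb i
  have hsum_int : Integrable (fun ω => exp (t * (∑ i, X i) ω)) μ :=
    hind.integrable_exp_mul_sum hX fun i _ => hint i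
  calc μ.real {ω | a ≤ ∑ i, X i ω} = μ.real {ω | a ≤ (∑ i, X i) ω} := by simp [Finset.sum_apply]
    _ ≤ exp (-t * a) * mgf (∑ i, X i) μ t := measure_ge_le_exp_mul_mgf a ht hsum_int
    _ ≤ exp (-t * a) * exp (Fintype.card ι * b) := by gcongr
    _ = exp (-t * a + Fintype.card ι * b) := (exp_add _ _).symm

theorem mgf_ite_sub_ite_le [IsProbabilityMeasure μ] {T₁ T₂ : Ω → Bool} (h₁ : Measurable T₁)
    (h₂ : Measurable T₂) (hdisj : ∀ ω, ¬(T₁ ω = true ∧ T₂ ω = true)) {δ : ℝ}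
    (hp₁ : μ.real {ω | T₁ ω = true} = δ / 2) (hp₂ : μ.real {ω | T₂ ω = true} = δ / 2)
    (hδ : 0 ≤ δ) {l : ℝ} (hl : |l| ≤ 1) :
    mgf (fun ω => (if T₁ ω then (1 : ℝ) else 0) - if T₂ ω then 1 else 0) μ l ≤
      exp (3 / 4 * δ * l ^ 2) := by
  have hpt : (fun ω => exp (l * ((if T₁ ω then (1 : ℝ) else 0) - if T₂ ω then 1 else 0))) =
      fun ω => 1 + ((if T₁ ω then exp l - 1 else 0) + if T₂ ω then exp (-l) - 1 else 0) := by
    ext ω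
    have := hdisj ω
    revert this
    cases T₁ ω <;> cases T₂ ω <;> simp
  have hmgf : mgf (fun ω => (if T₁ ω then (1 : ℝ) else 0) - if T₂ ω then 1 else 0) μ l =
      1 + δ / 2 * (exp l + exp (-l) - 2) := by
    have hi₁ := integrable_ite_bool (μ := μ) h₁ (exp l - 1)
    have hi₂ := integrable_ite_bool (μ := μ) h₂ (exp (-l) - 1)
    rw [mgf, hpt, integral_add (integrable_const 1) (hi₁.add hi₂ : Integrable (fun ω => _ + _) μ),
      integral_add hi₁ hi₂, integral_ite_bool h₁, integral_ite_bool h₂, hp₁, hp₂]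
    simp only [integral_const, probReal_univ, smul_eq_mul, mul_one]
    ring
  have hquad := exp_le_one_add_add_mul_sq hl
  have hquad' := exp_le_one_add_add_mul_sq (u := -l) (by rwa [abs_neg])
  rw [hmgf]
  calc _ ≤ 1 + 3 / 4 * δ * l ^ 2 := by nlinarith
    _ ≤ _ := by linarith [add_one_le_exp (3 / 4 * δ * l ^ 2)]

theorem measureReal_sum_ite_sub_ite_ge_le [IsProbabilityMeasure μ] {N : ℕ}
    {T₁ T₂ : Fin N → Ω → Bool} (h₁ : ∀ i, Measurable (T₁ i)) (h₂ : ∀ i, Measurable (T₂ i))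
    (hind : iIndepFun (fun i ω => (T₁ i ω, T₂ i ω)) μ)
    (hdisj : ∀ i ω, ¬(T₁ i ω = true ∧ T₂ i ω = true)) {δ : ℝ}
    (hp₁ : ∀ i, μ.real {ω | T₁ i ω = true} = δ / 2) (hp₂ : ∀ i, μ.real {ω | T₂ i ω = true} = δ / 2)
    (hδ : 0 ≤ δ) {s : ℝ} (hs : 0 < s) :
    μ.real {ω | N * s ≤ ∑ i, ((if T₁ i ω then (1 : ℝ) else 0) - if T₂ i ω then 1 else 0)} ≤
      exp (-(8 * N * s ^ 2) / (27 * δ + 12 * s)) := by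
  set D : Fin N → Ω → ℝ := fun i ω => (if T₁ i ω then (1 : ℝ) else 0) - if T₂ i ω then 1 else 0
  set g : Bool × Bool → ℝ := fun b => (if b.1 then (1 : ℝ) else 0) - if b.2 then 1 else 0
  have hD : ∀ i, Measurable (D i) := fun i =>
    (measurable_of_countable g).comp ((h₁ i).prodMk (h₂ i))
  have hDind : iIndepFun D μ := hind.comp (fun _ => g) fun _ => measurable_of_countable g
  -- Close to the maximiser `s / (3 / 2 * δ)` of `l * s - 3 / 4 * δ * l ^ 2`, but at most `1`,
  -- where the quadratic bound on `exp` holds.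
  set l := s / (3 / 2 * δ + s)
  have hl0 : 0 ≤ l := by positivity
  have hl1 : l ≤ 1 := div_le_one_of_le₀ (by linarith) (by positivity)
  have hint : ∀ i, Integrable (fun ω => exp (l * D i ω)) μ := fun i =>
    integrable_exp_mul_of_mem_Icc (a := -1) (b := 1) (hD i).aemeasurable
      (ae_of_all _ fun ω => by simp only [D]; split_ifs <;> norm_num)
  have hrate : 8 * s ^ 2 / (27 * δ + 12 * s) ≤ l * s - 3 / 4 * δ * l ^ 2 := by
    have hd : 0 < 3 / 2 * δ + s := by positivity
    have hl_eq : l * s - 3 / 4 * δ * l ^ 2 = s ^ 2 * (3 / 4 * δ + s) / (3 / 2 * δ + s) ^ 2 := by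
      simp only [l]
      field_simp
      ring
    rw [hl_eq, div_le_div_iff₀ (by positivity) (by positivity)]
    nlinarith [mul_nonneg (sq_nonneg s)
      (by positivity : 0 ≤ 9 / 4 * δ ^ 2 + 12 * δ * s + 4 * s ^ 2)]
  refine (measureReal_sum_ge_le_of_mgf_le hDind hD hl0 hint (fun i => mgf_ite_sub_ite_le (h₁ i)
    (h₂ i) (hdisj i) (hp₁ i) (hp₂ i) hδ (abs_le.2 ⟨by linarith, hl1⟩)) _).trans ?_
  rw [Fintype.card_fin, exp_le_exp]
  have := mul_le_mul_of_nonneg_left hrate (Nat.cast_nonneg N)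
  rw [show -(8 * N * s ^ 2) / (27 * δ + 12 * s) = -(N * (8 * s ^ 2 / (27 * δ + 12 * s))) by ring]
  linarith

theorem ofReal_one_sub_le_measure [IsProbabilityMeasure μ] {T B : Set Ω}
    (hTB : Tᶜ ⊆ B) {y : ℝ} (hB : μ.real B ≤ y) : ENNReal.ofReal (1 - y) ≤ μ T := by
  calc ENNReal.ofReal (1 - y) ≤ ENNReal.ofReal (1 - μ.real B) :=
        ENNReal.ofReal_le_ofReal (by linarith)
    _ = 1 - μ B := by
      rw [ENNReal.ofReal_sub _ measureReal_nonneg, ENNReal.ofReal_one, ofReal_measureReal]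
    _ ≤ 1 - μ Tᶜ := tsub_le_tsub_left (measure_mono hTB) 1
    _ ≤ μ T := by
      rw [tsub_le_iff_right, ← measure_univ (μ := μ), ← Set.union_compl_self T]
      exact measure_union_le _ _

end ConcentrationBounds

section ConcentrationFailure

variable {V : Type*} [Fintype V] [DecidableEq V] [LinearOrder V] {Ω : Type*} {N : ℕ}

def arcCount (R : Fin N → Ω → V × V → Bool) (ω : Ω) (p : V × V) : ℝ :=
  ∑ i, if R i ω p then 1 else 0

def concentrationFailure (R : Fin N → Ω → V × V → Bool) (A : Finset (V × V)) (β s : ℝ) :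
    Set Ω :=
  (⋃ e ∈ A, {ω | arcCount R ω e ≤ N * (1 / 2 + β / 2)}) ∪
    ⋃ c ∈ unconnectedPairs A, ({ω | N * s ≤ arcCount R ω c - arcCount R ω c.swap} ∪
      {ω | N * s ≤ arcCount R ω c.swap - arcCount R ω c})

theorem IsMaxAcyclicSubgraph.subset_of_notMem_concentrationFailure {A H : Finset (V × V)}
    (hA : Acyclic fun a b => (a, b) ∈ A) (hN : 0 < N) {R : Fin N → Ω → V × V → Bool} {ω : Ω}
    (hflip : ∀ i e, e ∈ A → R i ω e = !R i ω e.swap) {β U : ℝ} (hβ : 0 ≤ β)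
    (hU : ((unconnectedPairs A).card : ℝ) ≤ U) (hω : ω ∉ concentrationFailure R A β (β / U))
    (hH : IsMaxAcyclicSubgraph (fun p => (N : ℝ)⁻¹ * arcCount R ω p) H) : A ⊆ H := by
  simp only [concentrationFailure, Set.mem_union, Set.mem_iUnion, Set.mem_ofPred_eq, not_or,
    not_exists, not_le] at hω
  obtain ⟨harc, hunc⟩ := hω
  have hs : (unconnectedPairs A).card * (β / U) ≤ β := by
    rw [mul_div_left_comm]
    exact mul_le_of_le_one_right hβ (div_le_one_of_le₀ hU ((Nat.cast_nonneg _).trans hU))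
  have hN' : (0 : ℝ) < N := Nat.cast_pos.2 hN
  have hcount : ∀ p, 0 ≤ arcCount R ω p := fun p =>
    Finset.sum_nonneg fun _ _ => by split_ifs <;> norm_num
  refine hH.subset hA (fun p => mul_nonneg (inv_nonneg.2 hN'.le) (hcount p)) fun e he => ?_
  have hcomp : arcCount R ω e + arcCount R ω e.swap = N := by
    rw [arcCount, arcCount, ← Finset.sum_add_distrib]
    calc _ = ∑ _i : Fin N, (1 : ℝ) := Finset.sum_congr rfl fun i _ => by
            rw [hflip i e he]
            cases R i ω e.swap <;> simp
      _ = N := by simp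
  have hloss : ∑ c ∈ unconnectedPairs A,
      |(N : ℝ)⁻¹ * arcCount R ω c - (N : ℝ)⁻¹ * arcCount R ω c.swap| ≤ β := by
    refine (Finset.sum_le_card_nsmul _ _ (β / U) fun c hc => ?_).trans (by simpa using hs)
    rw [← mul_sub, abs_mul, abs_inv, Nat.abs_cast, inv_mul_le_iff₀ hN']
    exact abs_sub_le_iff.2 ⟨(hunc c hc).1.le, (hunc c hc).2.le⟩
  calc _ ≤ β := hloss
    _ = (N : ℝ)⁻¹ * (N * β) := by field_simp
    _ < (N : ℝ)⁻¹ * (arcCount R ω e - arcCount R ω e.swap) :=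
        mul_lt_mul_of_pos_left (by linarith [harc e he]) (inv_pos.2 hN')
    _ = _ := mul_sub _ _ _

variable [MeasurableSpace Ω]

theorem measureReal_concentrationFailure_le {μ : Measure Ω} [IsFiniteMeasure μ]
    {R : Fin N → Ω → V × V → Bool} {A : Finset (V × V)} {β s a b : ℝ}
    (harc : ∀ e ∈ A, μ.real {ω | arcCount R ω e ≤ N * (1 / 2 + β / 2)} ≤ a)
    (hunc : ∀ c ∈ unconnectedPairs A,
      μ.real ({ω | N * s ≤ arcCount R ω c - arcCount R ω c.swap} ∪
        {ω | N * s ≤ arcCount R ω c.swap - arcCount R ω c}) ≤ b) :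
    μ.real (concentrationFailure R A β s) ≤ A.card * a + (unconnectedPairs A).card * b := by
  have hA := (measureReal_biUnion_finset_le A _).trans (Finset.sum_le_card_nsmul A _ _ harc)
  have hU := (measureReal_biUnion_finset_le (unconnectedPairs A) _).trans
    (Finset.sum_le_card_nsmul _ _ _ hunc)
  rw [nsmul_eq_mul] at hA hU
  exact (measureReal_union_le _ _).trans (add_le_add hA hU)

end ConcentrationFailure

section PerturbationModel

open Real

variable {V : Type*} [LinearOrder V] {Ω : Type*} [MeasurableSpace Ω] {N : ℕ}

/-- The sample graphs `R i ω` follow the random graph model `𝒢(G, δ₁, δ₂)`, where `A` is the arc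
set of `G` and `R i ω p` tells whether the arc `p` lies in the `i`-th sample. -/
structure IsPerturbationModel (μ : Measure Ω) (A : Finset (V × V)) (δ₁ δ₂ : ℝ)
    (R : Fin N → Ω → V × V → Bool) : Prop where
  measurable : ∀ i p, Measurable fun ω => R i ω p
  flip : ∀ i ω u v, (u, v) ∈ A → R i ω (u, v) = !R i ω (v, u)
  flip_dist : ∀ i u v, (u, v) ∈ A → μ {ω | R i ω (u, v) = true} = ENNReal.ofReal (1 - δ₁)
  unconnected_disjoint : ∀ i ω u v, u ≠ v → (u, v) ∉ A → (v, u) ∉ A →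
    ¬(R i ω (u, v) = true ∧ R i ω (v, u) = true)
  unconnected_dist : ∀ i u v, u ≠ v → (u, v) ∉ A → (v, u) ∉ A →
    μ {ω | R i ω (u, v) = true} = ENNReal.ofReal (δ₂ / 2)
  indep : iIndepFun (fun x : Fin N × {p : V × V // p.1 < p.2} => fun ω =>
    (R x.1 ω x.2.1, R x.1 ω (x.2.1.2, x.2.1.1))) μ

namespace IsPerturbationModel

variable {μ : Measure Ω} {A : Finset (V × V)} {δ₁ δ₂ : ℝ} {R : Fin N → Ω → V × V → Bool}

theorem iIndepFun_pair (hR : IsPerturbationModel μ A δ₁ δ₂ R) {p : V × V} (hp : p.1 ≠ p.2) :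
    iIndepFun (fun i ω => (R i ω p, R i ω p.swap)) μ := by
  have hinj (c : {p : V × V // p.1 < p.2}) : Function.Injective fun i : Fin N => (i, c) :=
    fun _ _ h => congrArg Prod.fst h
  rcases hp.lt_or_gt with hlt | hgt
  · exact hR.indep.precomp (hinj ⟨p, hlt⟩)
  · exact (hR.indep.precomp (hinj ⟨p.swap, hgt⟩)).comp (fun _ => Prod.swap)
      fun _ => measurable_swap

theorem measureReal_arcCount_le [IsProbabilityMeasure μ] (hR : IsPerturbationModel μ A δ₁ δ₂ R)
    (hA : Acyclic fun a b => (a, b) ∈ A) {e : V × V} (he : e ∈ A) {ε : ℝ} (hε : 0 < ε)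
    (hδ₁ : δ₁ = 1 / 2 - ε) :
    μ.real {ω | arcCount R ω e ≤ N * (1 / 2 + 3 * ε / 4 / 2)} ≤ exp (-(N * ε ^ 2) / 2) := by
  obtain ⟨u, v⟩ := e
  have hp : ∀ i, μ.real {ω | R i ω (u, v) = true} = 1 / 2 + ε := fun i => by
    rw [measureReal_def, hR.flip_dist i u v he, hδ₁, ENNReal.toReal_ofReal (by linarith)]
    ring
  have htail := measureReal_sum_ite_le_le (fun i => hR.measurable i _)
    ((hR.iIndepFun_pair fun (h : u = v) => hA.irrefl v (h ▸ he)).comp (fun _ => Prod.fst)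
      fun _ => measurable_fst) hp (t := 5 * ε / 8) (by positivity)
  refine le_trans (le_of_eq ?_) (htail.trans (exp_le_exp.2 ?_))
  · simp only [arcCount]
    ring_nf
  · nlinarith [mul_nonneg (Nat.cast_nonneg N : (0 : ℝ) ≤ N) (sq_nonneg ε)]

theorem measureReal_unconnected_le [Fintype V] [DecidableEq V] [IsProbabilityMeasure μ]
    (hR : IsPerturbationModel μ A δ₁ δ₂ R) {c : V × V} (hc : c ∈ unconnectedPairs A)
    (hδ₂ : 0 ≤ δ₂) {ε U : ℝ} (hε : 0 < ε) (hU : 0 < U) :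
    μ.real ({ω | N * (3 * ε / 4 / U) ≤ arcCount R ω c - arcCount R ω c.swap} ∪
        {ω | N * (3 * ε / 4 / U) ≤ arcCount R ω c.swap - arcCount R ω c}) ≤
      2 * exp (-(N * ε ^ 2) / (6 * U ^ 2 * δ₂ + 2 * U * ε)) := by
  set s := 3 * ε / 4 / U
  have hs : 0 < s := by positivity
  have hrate : -(8 * N * s ^ 2) / (27 * δ₂ + 12 * s) =
      -(N * ε ^ 2) / (6 * U ^ 2 * δ₂ + 2 * U * ε) := by
    rw [div_eq_div_iff (by positivity) (by positivity)]
    simp only [s]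
    field_simp
    ring
  have htail : ∀ p : V × V, p.1 ≠ p.2 → p ∉ A → p.swap ∉ A →
      μ.real {ω | N * s ≤ arcCount R ω p - arcCount R ω p.swap} ≤
        exp (-(N * ε ^ 2) / (6 * U ^ 2 * δ₂ + 2 * U * ε)) := by
    rintro ⟨u, v⟩ hp hpA hpsA
    have hq : ∀ i p, p = (u, v) ∨ p = (v, u) → μ.real {ω | R i ω p = true} = δ₂ / 2 := by
      rintro i _ (rfl | rfl)
      exacts [(congrArg ENNReal.toReal (hR.unconnected_dist i u v hp hpA hpsA)).trans
          (ENNReal.toReal_ofReal (by linarith)),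
        (congrArg ENNReal.toReal (hR.unconnected_dist i v u hp.symm hpsA hpA)).trans
          (ENNReal.toReal_ofReal (by linarith))]
    rw [← hrate]
    simpa only [arcCount, Finset.sum_sub_distrib] using measureReal_sum_ite_sub_ite_ge_le
      (fun i => hR.measurable i _) (fun i => hR.measurable i _) (hR.iIndepFun_pair hp)
      (fun i ω => hR.unconnected_disjoint i ω u v hp hpA hpsA) (fun i => hq i _ (.inl rfl))
      (fun i => hq i _ (.inr rfl)) hδ₂ hs
  obtain ⟨-, hlt, hcA, hcsA⟩ := Finset.mem_filter.1 hc
  have h₂ := htail c.swap hlt.ne' hcsA (by simpa using hcA)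
  rw [Prod.swap_swap] at h₂
  linarith [measureReal_union_le (μ := μ) {ω | N * s ≤ arcCount R ω c - arcCount R ω c.swap}
    {ω | N * s ≤ arcCount R ω c.swap - arcCount R ω c}, htail c hlt.ne hcA hcsA]

end IsPerturbationModel

end PerturbationModel

theorem ensemble_denoise_recovers_dag_general
    {V : Type*} [Fintype V] [DecidableEq V] [LinearOrder V]
    {Ω : Type*} [MeasurableSpace Ω] (μ : Measure Ω) [IsProbabilityMeasure μ]
    (A : Finset (V × V))
    -- ground truth is a DAG with no self-loops and at most one arc per pair
    (hacyc : Acyclic (fun a b => (a, b) ∈ A))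
    (N : ℕ) (hN : 0 < N)
    (ε : ℝ) (hε : 0 < ε) (δ₁ : ℝ) (hδ₁ : δ₁ = 0.5 - ε)
    (δ₂ : ℝ) (hδ₂ : δ₂ ∈ Set.Icc (0 : ℝ) 1)
    -- `R i ω p = true` iff the arc `p` is present in the `i`-th sample graph
    (R : Fin N → Ω → V × V → Bool)
    (hmeas : ∀ i p, Measurable (fun ω => R i ω p))
    -- each true arc is either kept or flipped (exactly one direction present)
    (hflip : ∀ i ω u v, (u, v) ∈ A → (R i ω (u, v) = !R i ω (v, u)))
    (hflipdist : ∀ i u v, (u, v) ∈ A →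
      μ {ω | R i ω (u, v) = true} = ENNReal.ofReal (1 - δ₁))
    -- unconnected pairs: never both directions; each direction w.p. δ₂/2
    (huncone : ∀ i ω u v, u ≠ v → (u, v) ∉ A → (v, u) ∉ A →
      ¬ (R i ω (u, v) = true ∧ R i ω (v, u) = true))
    (huncdist : ∀ i u v, u ≠ v → (u, v) ∉ A → (v, u) ∉ A →
      μ {ω | R i ω (u, v) = true} = ENNReal.ofReal (δ₂ / 2))
    -- independence across sample graphs and across (unordered) vertex pairs
    (hind : iIndepFun
      (fun x : Fin N × {p : V × V // p.1 < p.2} => fun ω =>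
        (R x.1 ω x.2.1, R x.1 ω (x.2.1.2, x.2.1.1))) μ) :
    ENNReal.ofReal
        (1 - 2 * A.card * Real.exp (-(N * ε ^ 2) / 2) -
          2 * ((Fintype.card V * (Fintype.card V - 1) : ℝ) / 2 - A.card) *
            Real.exp (-(N * ε ^ 2) /
              (6 * ((Fintype.card V * (Fintype.card V - 1) : ℝ) / 2 - A.card) ^ 2 * δ₂ +
                2 * ((Fintype.card V * (Fintype.card V - 1) : ℝ) / 2 - A.card) * ε))) ≤
      μ {ω | ∀ H : Finset (V × V),
        IsMaxAcyclicSubgraph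
          (fun p => (N : ℝ)⁻¹ * ∑ i, (if R i ω p then (1 : ℝ) else 0)) H →
        ∀ e ∈ A, e ∈ H} := by
  have hR : IsPerturbationModel μ A δ₁ δ₂ R := ⟨hmeas, hflip, hflipdist, huncone, huncdist, hind⟩
  set U : ℝ := (Fintype.card V * (Fintype.card V - 1) : ℝ) / 2 - A.card
  have hUnc : ((unconnectedPairs A).card : ℝ) ≤ U := card_unconnectedPairs_le hacyc
  have hfail := measureReal_concentrationFailure_le
    (fun e he => hR.measureReal_arcCount_le hacyc he hε (by rw [hδ₁]; norm_num))
    (fun c hc => hR.measureReal_unconnected_le hc hδ₂.1 hε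
      ((Nat.cast_pos.2 (Finset.card_pos.2 ⟨c, hc⟩)).trans_le hUnc))
  rw [sub_sub]
  refine ofReal_one_sub_le_measure (fun ω hω => ?_) (hfail.trans ?_)
  · by_contra hω'
    exact hω fun H hH => IsMaxAcyclicSubgraph.subset_of_notMem_concentrationFailure hacyc hN
      (fun i e he => hflip i ω e.1 e.2 he) (by positivity) hUnc hω' hH
  · nlinarith [mul_le_mul_of_nonneg_right hUnc (Real.exp_pos
      (-(N * ε ^ 2) / (6 * U ^ 2 * δ₂ + 2 * U * ε))).le,
      mul_nonneg (Nat.cast_nonneg A.card : (0 : ℝ) ≤ A.card) (Real.exp_pos (-(N * ε ^ 2) / 2)).le]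

/-- Let `G₁, …, G_N` be i.i.d. random perturbations of a ground truth
DAG `G = (V, A)` with flip probability `δ₁ = 0.5 − ε` (`ε > 0`) on true arcs and
spurious-edge probability `δ₂` on unconnected pairs.  Let `Ĝ` be the ensemble graph
whose weight on each arc is the fraction of the `N` sample graphs containing it.
Then with probability at least
`1 − 2|A| exp(−Nε²/2) − 2U exp(−Nε²/(6U²δ₂ + 2Uε))`, where
`U = |V|(|V|−1)/2 − |A|` is the number of unconnected pairs of `G`, every arc of `G`
belongs to the maximum-weight acyclic subgraph `MAS(Ĝ)`. -/
theorem ensemble_denoise_recovers_dag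
    {V : Type*} [Fintype V] [DecidableEq V] [LinearOrder V]
    {Ω : Type*} [MeasurableSpace Ω] (μ : Measure Ω) [IsProbabilityMeasure μ]
    (A : Finset (V × V))
    -- ground truth is a DAG with no self-loops and at most one arc per pair
    (hacyc : Acyclic (fun a b => (a, b) ∈ A))
    (hirr : ∀ v : V, (v, v) ∉ A)
    (hone : ∀ u v : V, (u, v) ∈ A → (v, u) ∉ A)
    (N : ℕ) (hN : 0 < N)
    (ε : ℝ) (hε : 0 < ε) (δ₁ : ℝ) (hδ₁ : δ₁ = 0.5 - ε)
    (δ₂ : ℝ) (hδ₂ : δ₂ ∈ Set.Icc (0 : ℝ) 1)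
    -- `R i ω p = true` iff the arc `p` is present in the `i`-th sample graph
    (R : Fin N → Ω → V × V → Bool)
    (hmeas : ∀ i p, Measurable (fun ω => R i ω p))
    (hnoself : ∀ i ω v, R i ω (v, v) = false)
    -- each true arc is either kept or flipped (exactly one direction present)
    (hflip : ∀ i ω u v, (u, v) ∈ A → (R i ω (u, v) = !R i ω (v, u)))
    (hflipdist : ∀ i u v, (u, v) ∈ A →
      μ {ω | R i ω (u, v) = true} = ENNReal.ofReal (1 - δ₁))
    -- unconnected pairs: never both directions; each direction w.p. δ₂/2
    (huncone : ∀ i ω u v, u ≠ v → (u, v) ∉ A → (v, u) ∉ A →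
      ¬ (R i ω (u, v) = true ∧ R i ω (v, u) = true))
    (huncdist : ∀ i u v, u ≠ v → (u, v) ∉ A → (v, u) ∉ A →
      μ {ω | R i ω (u, v) = true} = ENNReal.ofReal (δ₂ / 2))
    -- independence across sample graphs and across (unordered) vertex pairs
    (hind : iIndepFun
      (fun x : Fin N × {p : V × V // p.1 < p.2} => fun ω =>
        (R x.1 ω x.2.1, R x.1 ω (x.2.1.2, x.2.1.1))) μ) :
    ENNReal.ofReal
        (1 - 2 * A.card * Real.exp (-(N * ε ^ 2) / 2) -
          2 * ((Fintype.card V * (Fintype.card V - 1) : ℝ) / 2 - A.card) *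
            Real.exp (-(N * ε ^ 2) /
              (6 * ((Fintype.card V * (Fintype.card V - 1) : ℝ) / 2 - A.card) ^ 2 * δ₂ +
                2 * ((Fintype.card V * (Fintype.card V - 1) : ℝ) / 2 - A.card) * ε))) ≤
      μ {ω | ∀ H : Finset (V × V),
        IsMaxAcyclicSubgraph
          (fun p => (N : ℝ)⁻¹ * ∑ i, (if R i ω p then (1 : ℝ) else 0)) H →
        ∀ e ∈ A, e ∈ H} :=
  ensemble_denoise_recovers_dag_general μ A hacyc N hN ε hε δ₁ hδ₁ δ₂ hδ₂ R hmeas hflip hflipdist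
    huncone huncdist hind
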